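/- For every n ≥ 2, let A = A(5) be the torus-braid monodromy matrix of size n over ZMod 8 with T = 5 (corresponding to the Alexander quandle ℤ₈[T,T^{-1}]/(T−5)). Then the color period of A (the least positive integer p with A^p = I) equals 2n. -/

import Mathlib

/-! Write `A(T) = T • C + (1 - T) • N`, with `C` the cyclic shift and `N` the matrix whose last
row is all ones. Every column of `A(T)` sums to `1`, so `N * A = N` and the powers telescope:
`A ^ p = T ^ p • C ^ p + (1 - T) • (∑ a < p, T ^ a • C ^ a) * N`. As `C ^ n = 1`, this gives
`A ^ n = T ^ n • 1 + (1 - T) • Y` for some matrix `Y`. For `T = 5` in `ZMod 8` we have `T ^ 2 = 1` and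
`(1 - T) ^ 2 = 2 (1 - T) = 0`, so `A ^ (2n) = 1`, while the entry `(0, n - 1)` of `A ^ n` is
`(1 - T) T ^ (n - 1) = 4`, so `A ^ n ≠ 1`. Modulo `2`, `A(5)` reduces to `C`, whose order is `n`,
so every period is a multiple of `n`. -/

/-- The torus-braid monodromy matrix `A(T)`: the `n × n` matrix (rows and
columns indexed by `Fin n`, i.e. `0,…,n−1` instead of `1,…,n`) with
`A_{i,i+1} = T` for `i < n−1`, last row `(1, 1−T, …, 1−T)`, and all other
entries `0`. -/
def torusMatrix (R : Type*) [CommRing R] (n : ℕ) (T : R) :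
    Matrix (Fin n) (Fin n) R :=
  Matrix.of fun i j =>
    if (i : ℕ) = n - 1 then (if (j : ℕ) = 0 then 1 else 1 - T)
    else if (j : ℕ) = (i : ℕ) + 1 then T else 0

open Finset Matrix Fin.NatCast

def cyclicShift (R : Type*) [Semiring R] (n : ℕ) [NeZero n] : Matrix (Fin n) (Fin n) R :=
  of fun i j => if j = i + 1 then 1 else 0

def lastRowOnes (R : Type*) [Semiring R] (n : ℕ) : Matrix (Fin (n + 1)) (Fin (n + 1)) R :=
  vecMulVec (Pi.single (Fin.last n) 1) 1

section Semiring

variable {R : Type*} [Semiring R] {n : ℕ}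

theorem cyclicShift_mul_apply [NeZero n] {o : Type*} (M : Matrix (Fin n) o R) (i : Fin n) (j : o) :
    (cyclicShift R n * M) i j = M (i + 1) j := by
  simp [cyclicShift, mul_apply]

theorem cyclicShift_pow_mul_apply [NeZero n] {o : Type*} (p : ℕ) (M : Matrix (Fin n) o R)
    (i : Fin n) (j : o) : (cyclicShift R n ^ p * M) i j = M (i + p) j := by
  induction p generalizing i with
  | zero => simp
  | succ p ih =>
    rw [pow_succ', Matrix.mul_assoc, cyclicShift_mul_apply, ih, Nat.cast_succ,
      add_comm (p : Fin n), add_assoc]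

theorem cyclicShift_pow_self [NeZero n] : cyclicShift R n ^ n = 1 := by
  ext i j
  rw [← mul_one (cyclicShift R n ^ n), cyclicShift_pow_mul_apply, Fin.natCast_self, add_zero]

theorem cyclicShift_pow_eq_one_iff [NeZero n] [Nontrivial R] (p : ℕ) :
    cyclicShift R n ^ p = 1 ↔ n ∣ p := by
  constructor
  · intro h
    rw [← Fin.natCast_eq_zero]
    have h00 := cyclicShift_pow_mul_apply p (1 : Matrix (Fin n) (Fin n) R) 0 0
    rw [h, one_mul, zero_add, one_apply_eq, one_apply] at h00
    by_contra hp
    simp [hp] at h00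
  · rintro ⟨k, rfl⟩
    rw [pow_mul, cyclicShift_pow_self, one_pow]

theorem one_vecMul_cyclicShift [NeZero n] : 1 ᵥ* cyclicShift R n = 1 := by
  ext j
  have hj (i : Fin n) : j = i + 1 ↔ i = j - 1 := by rw [eq_sub_iff_add_eq, eq_comm]
  simp [vecMul, dotProduct, cyclicShift, hj]

theorem lastRowOnes_mul {M : Matrix (Fin (n + 1)) (Fin (n + 1)) R} (hM : 1 ᵥ* M = 1) :
    lastRowOnes R n * M = lastRowOnes R n := by
  rw [lastRowOnes, vecMulVec_mul, hM]

theorem one_vecMul_lastRowOnes : 1 ᵥ* lastRowOnes R n = 1 := by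
  ext j
  simp [lastRowOnes, vecMul, dotProduct, vecMulVec_apply]

end Semiring

section CommRing

variable {R : Type*} [CommRing R] {n : ℕ}

theorem torusMatrix_eq (T : R) :
    torusMatrix R (n + 1) T = T • cyclicShift R (n + 1) + (1 - T) • lastRowOnes R n := by
  ext i j
  simp only [torusMatrix, cyclicShift, lastRowOnes, of_apply, Matrix.add_apply, Matrix.smul_apply,
    vecMulVec_apply, Pi.one_apply, smul_eq_mul, mul_one, add_tsub_cancel_right]
  by_cases hi : i = Fin.last n
  · subst hi
    simp only [Fin.val_last, Fin.last_add_one, Pi.single_eq_same, Fin.val_eq_zero_iff]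
    split_ifs <;> ring
  · have hi' : (i : ℕ) ≠ n := fun h => hi (Fin.ext h)
    simp only [hi, hi', Pi.single_eq_of_ne hi, Fin.ext_iff, Fin.val_add_one,
      ↓reduceIte, mul_ite, mul_one, mul_zero, add_zero]

theorem one_vecMul_torusMatrix (T : R) : 1 ᵥ* torusMatrix R (n + 1) T = 1 := by
  rw [torusMatrix_eq, vecMul_add, vecMul_smul, vecMul_smul, one_vecMul_cyclicShift,
    one_vecMul_lastRowOnes, ← add_smul, add_sub_cancel, one_smul]

theorem torusMatrix_pow (T : R) (p : ℕ) :
    torusMatrix R (n + 1) T ^ p = T ^ p • cyclicShift R (n + 1) ^ p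
      + (1 - T) • ((∑ a ∈ range p, T ^ a • cyclicShift R (n + 1) ^ a) * lastRowOnes R n) := by
  induction p with
  | zero => simp
  | succ p ih =>
    have hNA := lastRowOnes_mul (one_vecMul_torusMatrix (n := n) T)
    rw [pow_succ, ih, add_mul, smul_mul_assoc, smul_mul_assoc, mul_assoc, hNA, torusMatrix_eq,
      mul_add, mul_smul_comm, mul_smul_comm, ← pow_succ, sum_range_succ, add_mul, smul_mul_assoc]
    module

theorem torusMatrix_pow_succ_self (T : R) :
    torusMatrix R (n + 1) T ^ (n + 1) = T ^ (n + 1) • 1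
      + (1 - T) • ((∑ a ∈ range (n + 1), T ^ a • cyclicShift R (n + 1) ^ a) * lastRowOnes R n) := by
  rw [torusMatrix_pow, cyclicShift_pow_self]

theorem torusMatrix_pow_succ_self_apply_zero (T : R) {j : Fin (n + 1)} (hj : j ≠ 0) :
    (torusMatrix R (n + 1) T ^ (n + 1)) 0 j = (1 - T) * T ^ n := by
  have hN (a : ℕ) : (cyclicShift R (n + 1) ^ a * lastRowOnes R n) 0 j
      = if (a : Fin (n + 1)) = Fin.last n then 1 else 0 := by
    simp [cyclicShift_pow_mul_apply, lastRowOnes, Pi.single_apply]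
  simp only [torusMatrix_pow_succ_self, Matrix.add_apply, Matrix.smul_apply, one_apply_ne hj.symm,
    sum_mul, Matrix.sum_apply, smul_mul_assoc, hN, smul_eq_mul, mul_ite, mul_one, mul_zero]
  rw [← Fin.sum_univ_eq_sum_range (fun a => if (a : Fin (n + 1)) = Fin.last n then T ^ a else 0)]
  simp

theorem torusMatrix_pow_succ_self_ne_one {T : R} (hT : IsUnit T) (hT1 : T ≠ 1) (hn : n ≠ 0) :
    torusMatrix R (n + 1) T ^ (n + 1) ≠ 1 := by
  intro h
  have hlast : Fin.last n ≠ 0 := Fin.val_ne_zero_iff.mp hn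
  have := torusMatrix_pow_succ_self_apply_zero T hlast
  rw [h, one_apply_ne hlast.symm, eq_comm, (hT.pow n).mul_left_eq_zero, sub_eq_zero] at this
  exact hT1 this.symm

theorem torusMatrix_pow_two_mul_succ_self {T : R} (hT : T ^ 2 = 1) (h2 : 2 * T = 2) :
    torusMatrix R (n + 1) T ^ (2 * (n + 1)) = 1 := by
  set Y := (∑ a ∈ range (n + 1), T ^ a • cyclicShift R (n + 1) ^ a) * lastRowOnes R n
  rw [pow_mul', torusMatrix_pow_succ_self, sq, add_mul, mul_add, mul_add]
  simp only [smul_mul_smul, one_mul, mul_one]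
  match_scalars
  · rw [mul_one, ← mul_pow, ← sq, hT, one_pow]
  · linear_combination (-T ^ (n + 1)) * h2
  · linear_combination hT - h2

theorem torusMatrix_map {S : Type*} [CommRing S] (f : R →+* S) (n : ℕ) (T : R) :
    (torusMatrix R n T).map f = torusMatrix S n (f T) := by
  ext i j
  simp [torusMatrix, apply_ite f]

theorem torusMatrix_one : torusMatrix R (n + 1) 1 = cyclicShift R (n + 1) := by
  simp [torusMatrix_eq]

theorem dvd_of_torusMatrix_pow_eq_one {S : Type*} [CommRing S] [Nontrivial S] (f : R →+* S)
    {T : R} (hT : f T = 1) {p : ℕ} (h : torusMatrix R (n + 1) T ^ p = 1) : n + 1 ∣ p := by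
  rw [← cyclicShift_pow_eq_one_iff (R := S), ← torusMatrix_one, ← hT, ← torusMatrix_map,
    ← Matrix.map_pow, h, Matrix.map_one _ f.map_zero f.map_one]

end CommRing

/-- For the Alexander quandle `ℤ₈[T,T⁻¹]/(T−5)` (i.e. `ZMod 8` with `T = 5`)
and every `n ≥ 2`, the color period (the least positive `p` with
`A(5)^p = 1`) equals `2n`. -/
theorem colorPeriod_Z8_T5 (n : ℕ) (hn : 2 ≤ n) :
    IsLeast {p : ℕ | 0 < p ∧ torusMatrix (ZMod 8) n 5 ^ p = 1} (2 * n) := by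
  obtain ⟨m, rfl⟩ : ∃ m, n = m + 1 := ⟨n - 1, by omega⟩
  refine ⟨⟨by omega, torusMatrix_pow_two_mul_succ_self (by decide) (by decide)⟩, ?_⟩
  rintro p ⟨hp, h⟩
  obtain ⟨q, rfl⟩ :=
    dvd_of_torusMatrix_pow_eq_one (ZMod.castHom (by norm_num : 2 ∣ 8) (ZMod 2)) (by decide) h
  have hq0 : q ≠ 0 := by rintro rfl; simp at hp
  have hq1 : q ≠ 1 := by
    rintro rfl
    rw [mul_one] at h
    exact torusMatrix_pow_succ_self_ne_one (T := (5 : ZMod 8)) (by decide) (by decide) (by omega) h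
  rw [mul_comm]
  exact Nat.mul_le_mul_left _ (by omega)
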